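/- arXiv:2102.13091 — 5 statements merged into one kernel-verified Lean document; each statement's English description precedes it below -/
import Mathlib

section
/- The relation R̂ between pairs, restricted to consistent pairs, is transitive and irreflexive. -/
namespace QRC1

/-- Strictly positive formulas of QRC₁ over a signature with constants `Cst`,
relation symbols `Rl`, and arity function `ar`.  Terms are either variables
(natural numbers, left) or constants (right). -/
inductive Fml (Cst Rl : Type) (ar : Rl → ℕ) : Type
  | top : Fml Cst Rl ar
  | rel (S : Rl) (ts : Fin (ar S) → ℕ ⊕ Cst) : Fml Cst Rl ar
  | and (φ ψ : Fml Cst Rl ar) : Fml Cst Rl ar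
  | dia (φ : Fml Cst Rl ar) : Fml Cst Rl ar
  | all (x : ℕ) (φ : Fml Cst Rl ar) : Fml Cst Rl ar

namespace Fml

variable {Cst Rl : Type} {ar : Rl → ℕ}

/-- Free variables of a formula. -/
def fv : Fml Cst Rl ar → Set ℕ
  | .top => ∅
  | .rel _ ts => {x | ∃ i, ts i = Sum.inl x}
  | .and φ ψ => fv φ ∪ fv ψ
  | .dia φ => fv φ
  | .all y φ => fv φ \ {y}

/-- A formula is closed when it has no free variables. -/
def Closed (φ : Fml Cst Rl ar) : Prop := φ.fv = ∅

/-- Constants occurring in a formula. -/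
def consts : Fml Cst Rl ar → Set Cst
  | .top => ∅
  | .rel _ ts => {c | ∃ i, ts i = Sum.inr c}
  | .and φ ψ => consts φ ∪ consts ψ
  | .dia φ => consts φ
  | .all _ φ => consts φ

/-- Substitution of a term for a variable, on terms. -/
def substT (x : ℕ) (t : ℕ ⊕ Cst) : ℕ ⊕ Cst → ℕ ⊕ Cst
  | .inl y => if y = x then t else .inl y
  | .inr c => .inr c

/-- `φ.subst x t` replaces all free occurrences of variable `x` in `φ` by the term `t`. -/
def subst : Fml Cst Rl ar → ℕ → (ℕ ⊕ Cst) → Fml Cst Rl ar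
  | .top, _, _ => .top
  | .rel S ts, x, t => .rel S (fun i => substT x t (ts i))
  | .and φ ψ, x, t => .and (φ.subst x t) (ψ.subst x t)
  | .dia φ, x, t => .dia (φ.subst x t)
  | .all y φ, x, t => if y = x then .all y φ else .all y (φ.subst x t)

/-- `FreeFor t x φ`: the term `t` is free for the variable `x` in `φ`, i.e. no
free occurrence of a variable of `t` becomes bound in `φ[x/t]`. -/
def FreeFor (t : ℕ ⊕ Cst) (x : ℕ) : Fml Cst Rl ar → Prop
  | .top => True
  | .rel _ _ => True
  | .and φ ψ => FreeFor t x φ ∧ FreeFor t x ψ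
  | .dia φ => FreeFor t x φ
  | .all y φ => x ∉ fv (Fml.all y φ) ∨ (t ≠ .inl y ∧ FreeFor t x φ)

/-- Modal depth. -/
def mdepth : Fml Cst Rl ar → ℕ
  | .top => 0
  | .rel _ _ => 0
  | .and φ ψ => max φ.mdepth ψ.mdepth
  | .dia φ => φ.mdepth + 1
  | .all _ φ => φ.mdepth

/-- Quantifier depth. -/
def udepth : Fml Cst Rl ar → ℕ
  | .top => 0
  | .rel _ _ => 0
  | .and φ ψ => max φ.udepth ψ.udepth
  | .dia φ => φ.udepth
  | .all _ φ => φ.udepth + 1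

/-- Number of distinct constants occurring in a formula. -/
noncomputable def cdepth (φ : Fml Cst Rl ar) : ℕ := φ.consts.ncard

/-- Size of a formula (for termination purposes). -/
def size : Fml Cst Rl ar → ℕ
  | .top => 1
  | .rel _ _ => 1
  | .and φ ψ => φ.size + ψ.size + 1
  | .dia φ => φ.size + 1
  | .all _ φ => φ.size + 1

theorem size_subst (φ : Fml Cst Rl ar) (x : ℕ) (t : ℕ ⊕ Cst) :
    (φ.subst x t).size = φ.size := by
  induction φ generalizing x t with
  | top => rfl
  | rel S ts => rfl
  | and φ ψ ihφ ihψ => simp [subst, size, ihφ, ihψ]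
  | dia φ ih => simp [subst, size, ih]
  | all y φ ih => by_cases h : y = x <;> simp [subst, h, size, ih]

/-- The closure of a formula under a set of constants `C`, where the
subformulas of `∀x φ` are all `φ[x/c]` for `c ∈ C`. -/
def cl (C : Set Cst) : Fml Cst Rl ar → Set (Fml Cst Rl ar)
  | .top => {.top}
  | .rel S ts => {.rel S ts, .top}
  | .and φ ψ => {.and φ ψ} ∪ φ.cl C ∪ ψ.cl C
  | .dia φ => {.dia φ} ∪ φ.cl C
  | .all x φ => {.all x φ} ∪ ⋃ c ∈ C, (φ.subst x (.inr c)).cl C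
termination_by φ => φ.size
decreasing_by all_goals (simp [size, size_subst]; try omega)

/-- Renaming of constants along a map `f` (used for signature extensions). -/
def mapC {Cst' : Type} (f : Cst → Cst') : Fml Cst Rl ar → Fml Cst' Rl ar
  | .top => .top
  | .rel S ts => .rel S (fun i => Sum.map id f (ts i))
  | .and φ ψ => .and (φ.mapC f) (ψ.mapC f)
  | .dia φ => .dia (φ.mapC f)
  | .all x φ => .all x (φ.mapC f)

/-- Simultaneous substitution of terms for variables. -/
def msubst (σ : ℕ → ℕ ⊕ Cst) : Fml Cst Rl ar → Fml Cst Rl ar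
  | .top => .top
  | .rel S ts => .rel S (fun i => match ts i with
      | .inl x => σ x
      | .inr c => .inr c)
  | .and φ ψ => .and (φ.msubst σ) (ψ.msubst σ)
  | .dia φ => .dia (φ.msubst σ)
  | .all x φ => .all x (φ.msubst (Function.update σ x (.inl x)))

/-- `φ^g`: replace every free variable `x` of `φ` by the constant `g x`. -/
def capp (g : ℕ → Cst) (φ : Fml Cst Rl ar) : Fml Cst Rl ar :=
  φ.msubst (fun x => .inr (g x))

end Fml

/-- The derivability relation `φ ⊢ ψ` of the calculus QRC₁. -/
inductive Der {Cst Rl : Type} {ar : Rl → ℕ} : Fml Cst Rl ar → Fml Cst Rl ar → Prop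
  | top (φ) : Der φ .top
  | refl (φ) : Der φ φ
  | andE1 (φ ψ) : Der (.and φ ψ) φ
  | andE2 (φ ψ) : Der (.and φ ψ) ψ
  | andI {φ ψ χ} : Der φ ψ → Der φ χ → Der φ (.and ψ χ)
  | cut {φ ψ χ} : Der φ ψ → Der ψ χ → Der φ χ
  | diaMono {φ ψ} : Der φ ψ → Der (.dia φ) (.dia ψ)
  | diaTrans (φ) : Der (.dia (.dia φ)) (.dia φ)
  | allI {φ ψ} (x) : Der φ ψ → x ∉ φ.fv → Der φ (.all x ψ)
  | allE {φ ψ} (x) (t : ℕ ⊕ Cst) : Der (φ.subst x t) ψ → Fml.FreeFor t x φ →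
      Der (.all x φ) ψ
  | inst {φ ψ} (x) (t : ℕ ⊕ Cst) : Der φ ψ → Fml.FreeFor t x φ → Fml.FreeFor t x ψ →
      Der (φ.subst x t) (ψ.subst x t)
  | genC {φ ψ} (x) (c : Cst) : Der (φ.subst x (.inr c)) (ψ.subst x (.inr c)) →
      c ∉ φ.consts → c ∉ ψ.consts → Der φ ψ

section Depths

variable {Cst Rl : Type} {ar : Rl → ℕ}

/-- Modal depth of a set of formulas (the supremum of the modal depths). -/
noncomputable def mdepthSet (Γ : Set (Fml Cst Rl ar)) : ℕ := sSup (Fml.mdepth '' Γ)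

/-- Quantifier depth of a set of formulas. -/
noncomputable def udepthSet (Γ : Set (Fml Cst Rl ar)) : ℕ := sSup (Fml.udepth '' Γ)

/-- Maximum number of distinct constants per formula in a set of formulas. -/
noncomputable def cdepthSet (Γ : Set (Fml Cst Rl ar)) : ℕ := sSup (Fml.cdepth '' Γ)

/-- Closure of a set of formulas under a set of constants. -/
def clSet (C : Set Cst) (Γ : Set (Fml Cst Rl ar)) : Set (Fml Cst Rl ar) :=
  ⋃ γ ∈ Γ, γ.cl C

/-- Conjunction of a finite list of formulas. -/
def conjList : List (Fml Cst Rl ar) → Fml Cst Rl ar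
  | [] => .top
  | φ :: L => .and φ (conjList L)

end Depths

/-- A pair `⟨p⁺, p⁻⟩` of sets of formulas. -/
structure Pair (Cst Rl : Type) (ar : Rl → ℕ) where
  pos : Set (Fml Cst Rl ar)
  neg : Set (Fml Cst Rl ar)

namespace Pair

variable {Cst Rl : Type} {ar : Rl → ℕ}

/-- All formulas of the pair are closed. -/
def ClosedP (p : Pair Cst Rl ar) : Prop := ∀ φ ∈ p.pos ∪ p.neg, φ.Closed

/-- Consistency: the conjunction of (finitely many formulas of) `p⁺` does not
derive any formula of `p⁻`. -/
def Consistent (p : Pair Cst Rl ar) : Prop :=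
  ∀ δ ∈ p.neg, ∀ L : List (Fml Cst Rl ar), (∀ χ ∈ L, χ ∈ p.pos) → ¬ Der (conjList L) δ

/-- `Φ`-maximality: every formula of `Φ` is in `p⁺` or in `p⁻`, and `p`
contains only formulas of `Φ`. -/
def MaximalIn (Φ : Set (Fml Cst Rl ar)) (p : Pair Cst Rl ar) : Prop :=
  (∀ χ ∈ Φ, χ ∈ p.pos ∨ χ ∈ p.neg) ∧ p.pos ∪ p.neg ⊆ Φ

/-- Fully witnessed: every negative universal has a constant witness. -/
def FullyWitnessed (p : Pair Cst Rl ar) : Prop :=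
  ∀ (x : ℕ) (φ : Fml Cst Rl ar), Fml.all x φ ∈ p.neg →
    ∃ c : Cst, φ.subst x (.inr c) ∈ p.neg

/-- `Φ`-maximal, consistent, fully witnessed (and closed) pair. -/
def MCW (Φ : Set (Fml Cst Rl ar)) (p : Pair Cst Rl ar) : Prop :=
  p.ClosedP ∧ p.MaximalIn Φ ∧ p.Consistent ∧ p.FullyWitnessed

end Pair

/-- The relation `R̂` between pairs. -/
def hatR {Cst Rl : Type} {ar : Rl → ℕ} (p q : Pair Cst Rl ar) : Prop :=
  (∀ φ : Fml Cst Rl ar, Fml.dia φ ∈ p.neg → φ ∈ q.neg ∧ Fml.dia φ ∈ q.neg) ∧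
  ∃ ψ : Fml Cst Rl ar, Fml.dia ψ ∈ p.pos ∧ Fml.dia ψ ∈ q.neg

/-- A relational model for QRC₁. -/
structure Model (Cst Rl : Type) (ar : Rl → ℕ) where
  W : Type
  R : W → W → Prop
  Dom : W → Type
  finDom : ∀ w, Finite (Dom w)
  η : ∀ w v, R w v → Dom w → Dom v
  I : ∀ w, Cst → Dom w
  J : ∀ w (S : Rl), Set (Fin (ar S) → Dom w)

namespace Model

variable {Cst Rl : Type} {ar : Rl → ℕ} (M : Model Cst Rl ar)

/-- Value of a term under a `w`-assignment. -/
def tval {w : M.W} (g : ℕ → M.Dom w) : ℕ ⊕ Cst → M.Dom w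
  | .inl x => g x
  | .inr c => M.I w c

/-- Kripke satisfaction `M, w ⊩^g φ`. -/
def Sat : (w : M.W) → (g : ℕ → M.Dom w) → Fml Cst Rl ar → Prop
  | _, _, .top => True
  | w, g, .rel S ts => (fun i => M.tval g (ts i)) ∈ M.J w S
  | w, g, .and φ ψ => Sat w g φ ∧ Sat w g ψ
  | w, g, .dia φ => ∃ (v : M.W) (h : M.R w v), Sat v (fun n => M.η w v h (g n)) φ
  | w, g, .all x φ => ∀ h : ℕ → M.Dom w, (∀ y, y ≠ x → h y = g y) → Sat w h φ

/-- Adequate models: transitive accessibility, transitive `η` functions, and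
concordant interpretation of constants. -/
structure Adequate : Prop where
  trans : Transitive M.R
  etaTrans : ∀ {w u v : M.W} (h1 : M.R w u) (h2 : M.R u v) (h3 : M.R w v),
    M.η w v h3 = M.η u v h2 ∘ M.η w u h1
  concord : ∀ {w u : M.W} (h : M.R w u) (c : Cst), M.I u c = M.η w u h (M.I w c)

/-- Constant domain: all worlds have the same domain. -/
def ConstantDomain : Prop := ∀ w v : M.W, M.Dom w = M.Dom v

end Model


theorem hatR_trans_irrefl (Cst Rl : Type) (ar : Rl → ℕ) :
    (∀ p q r : Pair Cst Rl ar, p.Consistent → q.Consistent → r.Consistent →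
      hatR p q → hatR q r → hatR p r) ∧
    (∀ p : Pair Cst Rl ar, p.Consistent → ¬ hatR p p) := by
  constructor
  · rintro p q r _ _ _ ⟨hpq1, ψ, hψp, hψq⟩ ⟨hqr1, _⟩
    refine ⟨fun φ hφ => (hqr1 φ (hpq1 φ hφ).2), ψ, hψp, (hqr1 ψ hψq).2⟩
  · rintro p hcons ⟨_, ψ, hpos, hneg⟩
    exact hcons _ hneg [Fml.dia ψ] (by simp [hpos]) (Der.andE1 _ _)


end QRC1
end

section
/- Pair existence lemma: let Σ be a signature with a finite set of constants C, and Φ a finite set of closed formulas in the language of Σ with |C| > 2·cdepth(Φ) + 2·udepth(Φ). If p is a Cl_C(Φ)-maximal, consistent, fully witnessed pair and ◇φ ∈ p⁺, then there is a Cl_C(Φ)-maximal, consistent, fully witnessed pair q such that p R̂ q, φ ∈ q⁺, and mdepth(q⁺) < mdepth(p⁺). -/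
namespace QRC1

/-!
The witness is the pair generated by `φ`: its positive part is the set of consequences of `φ`
in the closure `Cl(Φ)`, its negative part the rest of the closure. Consistency and maximality are
immediate. `p R̂ q` holds because `◇` is monotone and `◇◇δ ⊢ ◇δ`, so a consequence `δ` or `◇δ`
of `φ` with `◇δ ∈ p⁻` would make `p` inconsistent; and `◇φ ∈ q⁻` because derivations never
raise the modal depth, which also gives the drop in modal depth. For full witnessing, suppose
`φ ⊬ ∀x ψ` but `φ ⊢ ψ[x/c]` for every constant `c`. Instantiating a quantifier adds at most one
constant and removes one `∀`, so every formula of the closure has at most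
`cdepth Φ + udepth Φ` constants; the cardinality hypothesis then leaves a constant fresh for `φ`
and `ψ`, and generalizing on it yields `φ ⊢ ∀x ψ`.
-/

namespace Fml

variable {Cst Rl : Type} {ar : Rl → ℕ}

theorem substT_inr_eq_inl {x y : ℕ} {c : Cst} {t : ℕ ⊕ Cst} :
    substT x (.inr c) t = .inl y ↔ t = .inl y ∧ y ≠ x := by
  rcases t with z | d
  · by_cases hz : z = x <;> simp [substT, hz] <;> omega
  · simp [substT]

theorem substT_inr_eq_inr {x : ℕ} {c d : Cst} {t : ℕ ⊕ Cst} :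
    substT x (.inr c) t = .inr d ↔ t = .inr d ∨ t = .inl x ∧ c = d := by
  rcases t with z | e
  · by_cases hz : z = x <;> simp [substT, hz]
  · simp [substT]

theorem fv_subst_inr (φ : Fml Cst Rl ar) (x : ℕ) (c : Cst) :
    (φ.subst x (.inr c)).fv = φ.fv \ {x} := by
  induction φ generalizing x with
  | top => simp [subst, fv]
  | rel S ts => ext y; simp [subst, fv, substT_inr_eq_inl]
  | and φ ψ ihφ ihψ => simp only [subst, fv, ihφ, ihψ, Set.union_sdiff_distrib]
  | dia φ ih => simp [subst, fv, ih]
  | all y φ ih =>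
    by_cases h : y = x
    · subst h; simp [subst, fv]
    · simp only [subst, if_neg h, fv, ih, Set.sdiff_sdiff_comm]

theorem consts_subst_inr_subset (φ : Fml Cst Rl ar) (x : ℕ) (c : Cst) :
    (φ.subst x (.inr c)).consts ⊆ insert c φ.consts := by
  induction φ generalizing x with
  | top => simp [subst, consts]
  | rel S ts =>
    rintro d ⟨i, hi⟩
    rcases substT_inr_eq_inr.mp hi with h | ⟨-, rfl⟩
    exacts [Or.inr ⟨i, h⟩, Or.inl rfl]
  | and φ ψ ihφ ihψ =>
    simp only [subst, consts, Set.insert_union_distrib]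
    exact Set.union_subset_union (ihφ x) (ihψ x)
  | dia φ ih => exact ih x
  | all y φ ih =>
    by_cases h : y = x
    · simp [subst, h, consts]
    · simpa [subst, h, consts] using ih x

theorem consts_finite (φ : Fml Cst Rl ar) : φ.consts.Finite := by
  induction φ with
  | top => exact Set.finite_empty
  | rel S ts =>
    show (Sum.inr ⁻¹' Set.range ts).Finite
    exact (Set.finite_range ts).preimage Sum.inr_injective.injOn
  | and φ ψ ihφ ihψ => exact ihφ.union ihψ
  | dia φ ih | all _ φ ih => exact ih

theorem subst_eq_self_of_notMem_fv {φ : Fml Cst Rl ar} {x : ℕ} (t : ℕ ⊕ Cst)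
    (h : x ∉ φ.fv) : φ.subst x t = φ := by
  induction φ generalizing x with
  | top => rfl
  | rel S ts =>
    simp only [subst, rel.injEq, heq_eq_eq, true_and]
    funext i
    rcases hts : ts i with z | d
    · have hz : z ≠ x := by rintro rfl; exact h ⟨i, hts⟩
      simp [substT, hz]
    · rfl
  | and φ ψ ihφ ihψ =>
    simp only [fv, Set.mem_union, not_or] at h
    simp [subst, ihφ h.1, ihψ h.2]
  | dia φ ih => simp [subst, ih h]
  | all y φ ih =>
    by_cases hyx : y = x
    · simp [subst, hyx]
    · have : x ∉ φ.fv := fun hx => h ⟨hx, Ne.symm hyx⟩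
      simp [subst, hyx, ih this]

theorem mdepth_subst (φ : Fml Cst Rl ar) (x : ℕ) (t : ℕ ⊕ Cst) :
    (φ.subst x t).mdepth = φ.mdepth := by
  induction φ generalizing x t with
  | top | rel => rfl
  | and φ ψ ihφ ihψ => simp [subst, mdepth, ihφ, ihψ]
  | dia φ ih => simp [subst, mdepth, ih]
  | all y φ ih => by_cases h : y = x <;> simp [subst, h, mdepth, ih]

theorem udepth_subst (φ : Fml Cst Rl ar) (x : ℕ) (t : ℕ ⊕ Cst) :
    (φ.subst x t).udepth = φ.udepth := by
  induction φ generalizing x t with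
  | top | rel => rfl
  | and φ ψ ihφ ihψ => simp [subst, udepth, ihφ, ihψ]
  | dia φ ih => simp [subst, udepth, ih]
  | all y φ ih => by_cases h : y = x <;> simp [subst, h, udepth, ih]

theorem cdepth_subst_inr_le (φ : Fml Cst Rl ar) (x : ℕ) (c : Cst) :
    (φ.subst x (.inr c)).cdepth ≤ φ.cdepth + 1 :=
  calc (φ.subst x (.inr c)).cdepth
      ≤ (insert c φ.consts).ncard :=
        Set.ncard_le_ncard (consts_subst_inr_subset φ x c) (φ.consts_finite.insert c)
    _ ≤ φ.cdepth + 1 := Set.ncard_insert_le c φ.consts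

theorem cl_induction {C : Set Cst} (P : Fml Cst Rl ar → Prop)
    (hrel : ∀ S ts, P (.rel S ts) → P .top)
    (hand : ∀ φ ψ, P (.and φ ψ) → P φ ∧ P ψ)
    (hdia : ∀ φ, P (.dia φ) → P φ)
    (hall : ∀ x φ, ∀ c ∈ C, P (.all x φ) → P (φ.subst x (.inr c))) :
    ∀ {γ χ : Fml Cst Rl ar}, χ ∈ γ.cl C → P γ → P χ
  | .top, χ, hχ, hγ => by rw [cl] at hχ; rwa [hχ]
  | .rel S ts, χ, hχ, hγ => by
    rw [cl] at hχ
    rcases hχ with rfl | rfl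
    exacts [hγ, hrel S ts hγ]
  | .and φ ψ, χ, hχ, hγ => by
    rw [cl] at hχ
    rcases hχ with (rfl | hχ) | hχ
    · exact hγ
    · exact cl_induction P hrel hand hdia hall hχ (hand φ ψ hγ).1
    · exact cl_induction P hrel hand hdia hall hχ (hand φ ψ hγ).2
  | .dia φ, χ, hχ, hγ => by
    rw [cl] at hχ
    rcases hχ with rfl | hχ
    · exact hγ
    · exact cl_induction P hrel hand hdia hall hχ (hdia φ hγ)
  | .all x φ, χ, hχ, hγ => by
    rw [cl] at hχ
    simp only [Set.mem_union, Set.mem_singleton_iff, Set.mem_iUnion] at hχ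
    rcases hχ with rfl | ⟨c, hc, hχ⟩
    · exact hγ
    · exact cl_induction P hrel hand hdia hall hχ (hall x φ c hc hγ)
termination_by γ => γ.size
decreasing_by all_goals simp only [size, size_subst]; omega

variable {C : Set Cst}

theorem mem_cl_self (φ : Fml Cst Rl ar) : φ ∈ φ.cl C := by
  cases φ <;> simp [cl]

theorem cl_subset_of_mem {γ χ : Fml Cst Rl ar} (h : χ ∈ γ.cl C) : χ.cl C ⊆ γ.cl C := by
  refine cl_induction (fun χ => χ.cl C ⊆ γ.cl C) ?_ ?_ ?_ ?_ h subset_rfl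
  · intro S ts h
    simp only [cl, Set.singleton_subset_iff] at h ⊢
    exact h (by simp)
  · intro φ ψ h
    simp only [cl, Set.union_subset_iff] at h
    exact ⟨h.1.2, h.2⟩
  · intro φ h
    simp only [cl, Set.union_subset_iff] at h
    exact h.2
  · intro x φ c hc h
    simp only [cl, Set.union_subset_iff, Set.iUnion_subset_iff] at h
    exact h.2 c hc

theorem closed_of_mem_cl {γ χ : Fml Cst Rl ar} (h : χ ∈ γ.cl C) (hγ : γ.Closed) :
    χ.Closed := by
  refine cl_induction Closed ?_ ?_ ?_ ?_ h hγ <;> simp +contextual [Closed, fv, fv_subst_inr]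

theorem mdepth_le_of_mem_cl {γ χ : Fml Cst Rl ar} (h : χ ∈ γ.cl C) :
    χ.mdepth ≤ γ.mdepth := by
  refine cl_induction (fun χ => χ.mdepth ≤ γ.mdepth) ?_ ?_ ?_ ?_ h le_rfl <;>
    simp +contextual [mdepth, mdepth_subst]
  omega

theorem cdepth_add_udepth_le_of_mem_cl {γ χ : Fml Cst Rl ar} (h : χ ∈ γ.cl C) :
    χ.cdepth + χ.udepth ≤ γ.cdepth + γ.udepth := by
  refine cl_induction (fun χ => χ.cdepth + χ.udepth ≤ γ.cdepth + γ.udepth) ?_ ?_ ?_ ?_ h le_rfl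
  · simp [cdepth, consts, udepth]
  · intro φ ψ h
    have hφ : φ.cdepth ≤ (and φ ψ).cdepth :=
      Set.ncard_le_ncard Set.subset_union_left (consts_finite _)
    have hψ : ψ.cdepth ≤ (and φ ψ).cdepth :=
      Set.ncard_le_ncard Set.subset_union_right (consts_finite _)
    simp only [udepth] at h
    omega
  · exact fun _ => id
  · intro x φ c _ h
    have hsubst := cdepth_subst_inr_le φ x c
    have hall : (all x φ).cdepth = φ.cdepth := rfl
    simp only [udepth, udepth_subst] at h ⊢
    omega

end Fml

section Closure

variable {Cst Rl : Type} {ar : Rl → ℕ} {C : Set Cst} {Φ : Set (Fml Cst Rl ar)}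
  {φ χ : Fml Cst Rl ar}

theorem mem_clSet : χ ∈ clSet C Φ ↔ ∃ γ ∈ Φ, χ ∈ γ.cl C := by
  simp [clSet]

theorem mem_clSet_of_mem_cl (hφ : φ ∈ clSet C Φ) (hχ : χ ∈ φ.cl C) : χ ∈ clSet C Φ := by
  obtain ⟨γ, hγ, hφγ⟩ := mem_clSet.mp hφ
  exact mem_clSet.mpr ⟨γ, hγ, Fml.cl_subset_of_mem hφγ hχ⟩

theorem mem_clSet_of_dia_mem (h : Fml.dia φ ∈ clSet C Φ) : φ ∈ clSet C Φ :=
  mem_clSet_of_mem_cl h (by simp [Fml.cl, Fml.mem_cl_self])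

theorem subst_mem_clSet_of_all_mem {x : ℕ} {c : Cst} (h : Fml.all x φ ∈ clSet C Φ)
    (hc : c ∈ C) : φ.subst x (.inr c) ∈ clSet C Φ :=
  mem_clSet_of_mem_cl h (by rw [Fml.cl]; exact Or.inr (Set.mem_biUnion hc (Fml.mem_cl_self _)))

theorem closed_of_mem_clSet (hΦ : ∀ γ ∈ Φ, γ.Closed) (h : χ ∈ clSet C Φ) : χ.Closed := by
  obtain ⟨γ, hγ, hχ⟩ := mem_clSet.mp h
  exact Fml.closed_of_mem_cl hχ (hΦ γ hγ)

theorem mdepth_le_mdepthSet_of_mem_clSet (hΦ : Φ.Finite) (h : χ ∈ clSet C Φ) :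
    χ.mdepth ≤ mdepthSet Φ := by
  obtain ⟨γ, hγ, hχ⟩ := mem_clSet.mp h
  exact (Fml.mdepth_le_of_mem_cl hχ).trans (le_csSup (hΦ.image _).bddAbove ⟨γ, hγ, rfl⟩)

theorem cdepth_add_udepth_le_of_mem_clSet (hΦ : Φ.Finite) (h : χ ∈ clSet C Φ) :
    χ.cdepth + χ.udepth ≤ cdepthSet Φ + udepthSet Φ := by
  obtain ⟨γ, hγ, hχ⟩ := mem_clSet.mp h
  refine (Fml.cdepth_add_udepth_le_of_mem_cl hχ).trans (add_le_add ?_ ?_) <;>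
    exact le_csSup (hΦ.image _).bddAbove ⟨γ, hγ, rfl⟩

theorem exists_fresh_const_of_mem_clSet (hΦ : Φ.Finite)
    (hcard : 2 * cdepthSet Φ + 2 * udepthSet Φ < Nat.card Cst) (hφ : φ ∈ clSet C Φ)
    (hχ : χ ∈ clSet C Φ) : ∃ c, c ∉ φ.consts ∧ c ∉ χ.consts := by
  have hφ' := cdepth_add_udepth_le_of_mem_clSet hΦ hφ
  have hχ' := cdepth_add_udepth_le_of_mem_clSet hΦ hχ
  have hlt : (φ.consts ∪ χ.consts).ncard < (Set.univ : Set Cst).ncard := by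
    rw [Set.ncard_univ]
    refine (Set.ncard_union_le _ _).trans_lt ?_
    simp only [Fml.cdepth] at hφ' hχ'
    omega
  obtain ⟨c, -, hc⟩ :=
    Set.exists_mem_notMem_of_ncard_lt_ncard hlt (φ.consts_finite.union χ.consts_finite)
  exact ⟨c, fun h => hc (Or.inl h), fun h => hc (Or.inr h)⟩

end Closure

namespace Der

variable {Cst Rl : Type} {ar : Rl → ℕ} {φ ψ : Fml Cst Rl ar}

theorem mdepth_le (h : Der φ ψ) : ψ.mdepth ≤ φ.mdepth := by
  induction h with
  | top => exact Nat.zero_le _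
  | refl | diaTrans => simp [Fml.mdepth]
  | andE1 => exact le_max_left _ _
  | andE2 => exact le_max_right _ _
  | andI _ _ ih1 ih2 => exact max_le ih1 ih2
  | cut _ _ ih1 ih2 => exact ih2.trans ih1
  | diaMono _ ih => exact Nat.succ_le_succ ih
  | allI _ _ _ ih => exact ih
  | allE _ _ _ _ ih | inst _ _ _ _ _ ih | genC _ _ _ _ _ ih =>
    simpa [Fml.mdepth, Fml.mdepth_subst] using ih

theorem conjList {L : List (Fml Cst Rl ar)} (h : ∀ χ ∈ L, Der φ χ) : Der φ (conjList L) := by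
  induction L with
  | nil => exact .top φ
  | cons χ L ih => exact .andI (h χ (by simp)) (ih fun χ hχ => h χ (by simp [hχ]))

theorem all_of_subst_fresh {x : ℕ} {c : Cst} (hx : x ∉ φ.fv) (hφ : c ∉ φ.consts)
    (hψ : c ∉ ψ.consts) (h : Der φ (ψ.subst x (.inr c))) : Der φ (.all x ψ) := by
  rw [← Fml.subst_eq_self_of_notMem_fv (.inr c) hx] at h
  exact .allI x (.genC x c h hφ hψ) hx

end Der

namespace Pair

variable {Cst Rl : Type} {ar : Rl → ℕ}

theorem Consistent.not_der {p : Pair Cst Rl ar} (hp : p.Consistent) {χ δ : Fml Cst Rl ar}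
    (hχ : χ ∈ p.pos) (hδ : δ ∈ p.neg) : ¬ Der χ δ := fun h =>
  hp δ hδ [χ] (by simpa using hχ) (.cut (.andE1 _ _) h)

def generatedBy (Ψ : Set (Fml Cst Rl ar)) (φ : Fml Cst Rl ar) : Pair Cst Rl ar :=
  ⟨{χ ∈ Ψ | Der φ χ}, {χ ∈ Ψ | ¬ Der φ χ}⟩

variable {Ψ : Set (Fml Cst Rl ar)} {φ : Fml Cst Rl ar}

theorem generatedBy_closedP (hΨ : ∀ χ ∈ Ψ, χ.Closed) : (generatedBy Ψ φ).ClosedP := by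
  rintro χ (hχ | hχ) <;> exact hΨ χ hχ.1

theorem generatedBy_maximalIn : (generatedBy Ψ φ).MaximalIn Ψ := by
  refine ⟨fun χ hχ => ?_, ?_⟩
  · by_cases h : Der φ χ
    exacts [Or.inl ⟨hχ, h⟩, Or.inr ⟨hχ, h⟩]
  · rintro χ (hχ | hχ) <;> exact hχ.1

theorem generatedBy_consistent : (generatedBy Ψ φ).Consistent :=
  fun _ hδ _ hL h => hδ.2 (.cut (Der.conjList fun χ hχ => (hL χ hχ).2) h)

theorem generatedBy_fullyWitnessed (hφ : φ.Closed)
    (hsubst : ∀ x ψ (c : Cst), Fml.all x ψ ∈ Ψ → ψ.subst x (.inr c) ∈ Ψ)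
    (hfresh : ∀ x ψ, Fml.all x ψ ∈ Ψ → ∃ c, c ∉ φ.consts ∧ c ∉ ψ.consts) :
    (generatedBy Ψ φ).FullyWitnessed := by
  rintro x ψ ⟨hall, hnot⟩
  obtain ⟨c, hcφ, hcψ⟩ := hfresh x ψ hall
  refine ⟨c, hsubst x ψ c hall, fun h => hnot ?_⟩
  exact Der.all_of_subst_fresh (hφ ▸ Set.notMem_empty x) hcφ hcψ h

theorem mdepthSet_generatedBy_pos_lt {p : Pair Cst Rl ar} (hbdd : BddAbove (Fml.mdepth '' p.pos))
    (hφ : Fml.dia φ ∈ p.pos) : mdepthSet (generatedBy Ψ φ).pos < mdepthSet p.pos :=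
  calc mdepthSet (generatedBy Ψ φ).pos
      ≤ φ.mdepth := csSup_le' (by rintro _ ⟨χ, hχ, rfl⟩; exact hχ.2.mdepth_le)
    _ < (Fml.dia φ).mdepth := Nat.lt_succ_self _
    _ ≤ mdepthSet p.pos := le_csSup hbdd ⟨_, hφ, rfl⟩

end Pair

theorem hatR_generatedBy {Cst Rl : Type} {ar : Rl → ℕ} {C : Set Cst}
    {Φ : Set (Fml Cst Rl ar)} {p : Pair Cst Rl ar} {φ : Fml Cst Rl ar} (hp : p.Consistent)
    (hpΦ : p.pos ∪ p.neg ⊆ clSet C Φ) (hφ : Fml.dia φ ∈ p.pos) :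
    hatR p (Pair.generatedBy (clSet C Φ) φ) := by
  refine ⟨fun δ hδ => ⟨⟨mem_clSet_of_dia_mem (hpΦ (Or.inr hδ)), fun h => ?_⟩,
    ⟨hpΦ (Or.inr hδ), fun h => ?_⟩⟩, φ, hφ, hpΦ (Or.inl hφ), fun h => ?_⟩
  · exact hp.not_der hφ hδ h.diaMono
  · exact hp.not_der hφ hδ (.cut h.diaMono (.diaTrans δ))
  · simpa [Fml.mdepth] using h.mdepth_le

theorem pair_existence_general (Cst Rl : Type) (ar : Rl → ℕ)
    (Φ : Set (Fml Cst Rl ar)) (hΦfin : Φ.Finite) (hΦcl : ∀ φ ∈ Φ, φ.Closed)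
    (hcard : 2 * cdepthSet Φ + 2 * udepthSet Φ < Nat.card Cst)
    (p : Pair Cst Rl ar) (hp : p.MCW (clSet Set.univ Φ))
    (φ : Fml Cst Rl ar) (hφ : Fml.dia φ ∈ p.pos) :
    ∃ q : Pair Cst Rl ar, q.MCW (clSet Set.univ Φ) ∧ hatR p q ∧ φ ∈ q.pos ∧
      mdepthSet q.pos < mdepthSet p.pos := by
  obtain ⟨-, ⟨-, hpΦ⟩, hpCons, -⟩ := hp
  have hφΦ : φ ∈ clSet Set.univ Φ := mem_clSet_of_dia_mem (hpΦ (Or.inl hφ))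
  have hbdd : BddAbove (Fml.mdepth '' p.pos) := ⟨mdepthSet Φ, by
    rintro _ ⟨χ, hχ, rfl⟩
    exact mdepth_le_mdepthSet_of_mem_clSet hΦfin (hpΦ (Or.inl hχ))⟩
  have hwit : (Pair.generatedBy (clSet Set.univ Φ) φ).FullyWitnessed :=
    Pair.generatedBy_fullyWitnessed (closed_of_mem_clSet hΦcl hφΦ)
      (fun _ _ c h => subst_mem_clSet_of_all_mem h (Set.mem_univ c))
      (fun _ _ h => exists_fresh_const_of_mem_clSet (χ := .all _ _) hΦfin hcard hφΦ h)
  refine ⟨Pair.generatedBy (clSet Set.univ Φ) φ, ⟨?_, Pair.generatedBy_maximalIn,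
    Pair.generatedBy_consistent, hwit⟩, hatR_generatedBy hpCons hpΦ hφ, ⟨hφΦ, .refl φ⟩,
    Pair.mdepthSet_generatedBy_pos_lt hbdd hφ⟩
  exact Pair.generatedBy_closedP fun χ hχ => closed_of_mem_clSet hΦcl hχ

theorem pair_existence (Cst Rl : Type) (ar : Rl → ℕ) [Finite Cst]
    (Φ : Set (Fml Cst Rl ar)) (hΦfin : Φ.Finite) (hΦcl : ∀ φ ∈ Φ, φ.Closed)
    (hcard : 2 * cdepthSet Φ + 2 * udepthSet Φ < Nat.card Cst)
    (p : Pair Cst Rl ar) (hp : p.MCW (clSet Set.univ Φ))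
    (φ : Fml Cst Rl ar) (hφ : Fml.dia φ ∈ p.pos) :
    ∃ q : Pair Cst Rl ar, q.MCW (clSet Set.univ Φ) ∧ hatR p q ∧ φ ∈ q.pos ∧
      mdepthSet q.pos < mdepthSet p.pos :=
  pair_existence_general Cst Rl ar Φ hΦfin hΦcl hcard p hp φ hφ

end QRC1
end

section
/- For any formula φ, any constant c, any variable x, any set of formulas Φ, and any set of constants C: (1) cdepth(φ) ≤ cdepth(φ[x/c]) ≤ cdepth(φ) + 1; (2) cdepth(φ) ≤ cdepth(Cl_C(φ)) ≤ cdepth(φ) + udepth(φ); (3) cdepth(Φ) ≤ cdepth(Cl_C(Φ)) ≤ cdepth(Φ) + udepth(Φ). In particular, the maximum number of distinct constants per formula in the closure under C is bounded independently of C. -/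
namespace QRC1

section Aux

variable {Cst Rl : Type} {ar : Rl → ℕ}

open Fml

theorem consts_finite (φ : Fml Cst Rl ar) : φ.consts.Finite := by
  induction φ with
  | top => simp [consts]
  | rel S ts =>
    have h : consts (Fml.rel (ar := ar) S ts) = ⋃ i, {c | ts i = Sum.inr c} := by
      ext c; simp [consts]
    rw [h]
    exact Set.finite_iUnion fun i =>
      Set.Subsingleton.finite fun a ha b hb => by
        simp only [Set.mem_setOf_eq] at ha hb
        exact Sum.inr_injective (ha.symm.trans hb)
  | and φ ψ ihφ ihψ => exact ihφ.union ihψ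
  | dia φ ih => exact ih
  | all y φ ih => exact ih

theorem consts_subset_subst (φ : Fml Cst Rl ar) (x : ℕ) (c : Cst) :
    φ.consts ⊆ (φ.subst x (Sum.inr c)).consts := by
  induction φ with
  | top => simp [subst]
  | rel S ts =>
    rintro d ⟨i, hi⟩
    exact ⟨i, by simp [substT, hi]⟩
  | and φ ψ ihφ ihψ =>
    intro d hd
    rcases hd with h | h
    · exact Or.inl (ihφ h)
    · exact Or.inr (ihψ h)
  | dia φ ih => exact ih
  | all y φ ih =>
    intro d hd
    by_cases h : y = x <;> simp [subst, h]
    · exact hd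
    · exact ih hd

theorem consts_subst_subset (φ : Fml Cst Rl ar) (x : ℕ) (c : Cst) :
    (φ.subst x (Sum.inr c)).consts ⊆ insert c φ.consts := by
  induction φ with
  | top => simp [subst, consts]
  | rel S ts =>
    rintro d ⟨i, hi⟩
    cases h : ts i with
    | inl y =>
      simp only [h, substT] at hi
      split at hi
      · exact Or.inl (Sum.inr_injective hi).symm
      · exact absurd hi (by simp)
    | inr e =>
      simp only [h, substT] at hi
      exact Or.inr ⟨i, h.trans hi⟩
  | and φ ψ ihφ ihψ =>
    intro d hd
    rcases hd with h | h
    · rcases ihφ h with h' | h'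
      · exact Or.inl h'
      · exact Or.inr (Or.inl h')
    · rcases ihψ h with h' | h'
      · exact Or.inl h'
      · exact Or.inr (Or.inr h')
  | dia φ ih => exact ih
  | all y φ ih =>
    intro d hd
    by_cases h : y = x
    · simp only [subst, if_pos h] at hd
      exact Or.inr hd
    · simp only [subst, if_neg h] at hd
      exact ih hd

theorem cdepth_subst_bounds (φ : Fml Cst Rl ar) (x : ℕ) (c : Cst) :
    φ.cdepth ≤ (φ.subst x (Sum.inr c)).cdepth ∧
      (φ.subst x (Sum.inr c)).cdepth ≤ φ.cdepth + 1 := by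
  constructor
  · exact Set.ncard_le_ncard (consts_subset_subst φ x c) (consts_finite _)
  · calc (φ.subst x (Sum.inr c)).cdepth
        ≤ (insert c φ.consts).ncard :=
          Set.ncard_le_ncard (consts_subst_subset φ x c) ((consts_finite φ).insert c)
      _ ≤ φ.consts.ncard + 1 := Set.ncard_insert_le _ _

theorem udepth_subst (φ : Fml Cst Rl ar) (x : ℕ) (t : ℕ ⊕ Cst) :
    (φ.subst x t).udepth = φ.udepth := by
  induction φ generalizing x t with
  | top => rfl
  | rel S ts => rfl
  | and φ ψ ihφ ihψ => simp [subst, udepth, ihφ, ihψ]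
  | dia φ ih => simp [subst, udepth, ih]
  | all y φ ih => by_cases h : y = x <;> simp [subst, h, udepth, ih]

theorem mem_cl_self (C : Set Cst) (φ : Fml Cst Rl ar) : φ ∈ φ.cl C := by
  cases φ <;> simp [cl]

theorem cdepth_le_of_mem_cl (C : Set Cst) :
    ∀ (φ ψ : Fml Cst Rl ar), ψ ∈ φ.cl C → ψ.cdepth ≤ φ.cdepth + φ.udepth
  | .top, ψ, h => by
    simp only [cl, Set.mem_singleton_iff] at h
    subst h
    simp [cdepth, consts]
  | .rel S ts, ψ, h => by
    simp only [cl, Set.mem_insert_iff, Set.mem_singleton_iff] at h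
    rcases h with rfl | rfl
    · simp [udepth]
    · simp [cdepth, consts]
  | .and φ₁ φ₂, ψ, h => by
    simp only [cl, Set.mem_union, Set.mem_singleton_iff] at h
    have h1 : φ₁.cdepth ≤ (Fml.and φ₁ φ₂).cdepth :=
      Set.ncard_le_ncard Set.subset_union_left ((consts_finite φ₁).union (consts_finite φ₂))
    have h2 : φ₂.cdepth ≤ (Fml.and φ₁ φ₂).cdepth :=
      Set.ncard_le_ncard Set.subset_union_right ((consts_finite φ₁).union (consts_finite φ₂))
    rcases h with (rfl | h) | h
    · simp
    · calc ψ.cdepth ≤ φ₁.cdepth + φ₁.udepth := cdepth_le_of_mem_cl C φ₁ ψ h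
        _ ≤ (Fml.and φ₁ φ₂).cdepth + (Fml.and φ₁ φ₂).udepth := by
            exact Nat.add_le_add h1 (le_max_left _ _)
    · calc ψ.cdepth ≤ φ₂.cdepth + φ₂.udepth := cdepth_le_of_mem_cl C φ₂ ψ h
        _ ≤ (Fml.and φ₁ φ₂).cdepth + (Fml.and φ₁ φ₂).udepth := by
            exact Nat.add_le_add h2 (le_max_right _ _)
  | .dia φ, ψ, h => by
    simp only [cl, Set.mem_union, Set.mem_singleton_iff] at h
    rcases h with rfl | h
    · simp [cdepth, consts, udepth]
    · exact cdepth_le_of_mem_cl C φ ψ h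
  | .all x φ, ψ, h => by
    simp only [cl, Set.mem_union, Set.mem_singleton_iff, Set.mem_iUnion] at h
    rcases h with rfl | ⟨c, _, h⟩
    · simp [cdepth, consts, udepth]
    · have hrec := cdepth_le_of_mem_cl C (φ.subst x (Sum.inr c)) ψ h
      have h1 := (cdepth_subst_bounds φ x c).2
      have h2 := udepth_subst φ x (Sum.inr c)
      show ψ.cdepth ≤ φ.cdepth + (φ.udepth + 1)
      omega
  termination_by φ => φ.size
  decreasing_by all_goals simp [Fml.size, Fml.size_subst]; try omega

end Aux

theorem cdepth_bounds (Cst Rl : Type) (ar : Rl → ℕ) (φ : Fml Cst Rl ar)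
    (c : Cst) (x : ℕ) (Φ : Set (Fml Cst Rl ar)) (hΦfin : Φ.Finite) (C : Set Cst) :
    (φ.cdepth ≤ (φ.subst x (Sum.inr c)).cdepth ∧
      (φ.subst x (Sum.inr c)).cdepth ≤ φ.cdepth + 1) ∧
    (φ.cdepth ≤ cdepthSet (φ.cl C) ∧ cdepthSet (φ.cl C) ≤ φ.cdepth + φ.udepth) ∧
    (cdepthSet Φ ≤ cdepthSet (clSet C Φ) ∧
      cdepthSet (clSet C Φ) ≤ cdepthSet Φ + udepthSet Φ) := by
  have bcl : ∀ ψ ∈ φ.cl C, ψ.cdepth ≤ φ.cdepth + φ.udepth :=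
    fun ψ h => cdepth_le_of_mem_cl C φ ψ h
  have bset : ∀ ψ ∈ clSet C Φ, ψ.cdepth ≤ cdepthSet Φ + udepthSet Φ := by
    intro ψ hψ
    obtain ⟨γ, hγ, hψ⟩ := Set.mem_iUnion₂.mp hψ
    have h1 : γ.cdepth ≤ cdepthSet Φ :=
      le_csSup ((hΦfin.image _).bddAbove) ⟨γ, hγ, rfl⟩
    have h2 : γ.udepth ≤ udepthSet Φ :=
      le_csSup ((hΦfin.image _).bddAbove) ⟨γ, hγ, rfl⟩
    have h3 := cdepth_le_of_mem_cl C γ ψ hψ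
    omega
  refine ⟨cdepth_subst_bounds φ x c, ⟨?_, ?_⟩, ?_, ?_⟩
  · exact le_csSup ⟨φ.cdepth + φ.udepth, by rintro _ ⟨ψ, hψ, rfl⟩; exact bcl ψ hψ⟩
      ⟨φ, mem_cl_self C φ, rfl⟩
  · exact csSup_le' (by rintro _ ⟨ψ, hψ, rfl⟩; exact bcl ψ hψ)
  · refine csSup_le' ?_
    rintro _ ⟨γ, hγ, rfl⟩
    exact le_csSup ⟨cdepthSet Φ + udepthSet Φ, by rintro _ ⟨ψ, hψ, rfl⟩; exact bset ψ hψ⟩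
      ⟨γ, Set.mem_iUnion₂.mpr ⟨γ, hγ, mem_cl_self C γ⟩, rfl⟩
  · exact csSup_le' (by rintro _ ⟨ψ, hψ, rfl⟩; exact bset ψ hψ)


end QRC1
end

section
/- If p is a pair of closed formulas that is Cl_C(Φ)-maximal, consistent, and fully witnessed, and ◇φ ∈ p⁺, then the pair r = ⟨{φ}, {δ, ◇δ : ◇δ ∈ p⁻} ∪ {◇φ}⟩ is consistent and satisfies p R̂ r. -/
namespace QRC1

section Aux

variable {Cst Rl : Type} {ar : Rl → ℕ}

theorem Fml.mdepth_subst_s15 (φ : Fml Cst Rl ar) (x : ℕ) (t : ℕ ⊕ Cst) :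
    (φ.subst x t).mdepth = φ.mdepth := by
  induction φ generalizing x t with
  | top => rfl
  | rel S ts => rfl
  | and φ ψ ihφ ihψ => simp [Fml.subst, Fml.mdepth, ihφ, ihψ]
  | dia φ ih => simp [Fml.subst, Fml.mdepth, ih]
  | all y φ ih => by_cases h : y = x <;> simp [Fml.subst, h, Fml.mdepth, ih]

theorem Der.mdepth_le_s15 {φ ψ : Fml Cst Rl ar} (h : Der φ ψ) :
    ψ.mdepth ≤ φ.mdepth := by
  induction h with
  | top => simp [Fml.mdepth]
  | refl => exact le_rfl
  | andE1 φ ψ => simp [Fml.mdepth]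
  | andE2 φ ψ => simp [Fml.mdepth]
  | andI _ _ ih1 ih2 => simp [Fml.mdepth]; omega
  | cut _ _ ih1 ih2 => omega
  | diaMono _ ih => simp [Fml.mdepth]; omega
  | diaTrans φ => simp [Fml.mdepth]
  | allI x _ _ ih => simpa [Fml.mdepth] using ih
  | allE x t _ _ ih => simpa [Fml.mdepth, Fml.mdepth_subst_s15] using ih
  | inst x t _ _ _ ih => simpa [Fml.mdepth_subst_s15] using ih
  | genC x c _ _ _ ih => simpa [Fml.mdepth_subst_s15] using ih

theorem der_conjList_of_eq (φ : Fml Cst Rl ar) (L : List (Fml Cst Rl ar))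
    (h : ∀ χ ∈ L, χ = φ) : Der φ (conjList L) := by
  induction L with
  | nil => exact Der.top φ
  | cons ψ L ih =>
    have hψ : ψ = φ := h ψ (by simp)
    subst hψ
    exact Der.andI (Der.refl ψ) (ih (fun χ hχ => h χ (by simp [hχ])))

end Aux

theorem successor_pair_consistent (Cst Rl : Type) (ar : Rl → ℕ)
    (C : Set Cst) (Φ : Set (Fml Cst Rl ar)) (p : Pair Cst Rl ar)
    (hclosed : p.ClosedP) (hmax : p.MaximalIn (clSet C Φ)) (hcons : p.Consistent)
    (hfw : p.FullyWitnessed) (φ : Fml Cst Rl ar) (hφ : Fml.dia φ ∈ p.pos) :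
    (Pair.mk {φ}
        ({χ | ∃ δ : Fml Cst Rl ar, Fml.dia δ ∈ p.neg ∧ (χ = δ ∨ χ = Fml.dia δ)} ∪
          {Fml.dia φ})).Consistent ∧
    hatR p (Pair.mk {φ}
        ({χ | ∃ δ : Fml Cst Rl ar, Fml.dia δ ∈ p.neg ∧ (χ = δ ∨ χ = Fml.dia δ)} ∪
          {Fml.dia φ})) := by
  constructor
  · -- consistency
    intro δ' hδ' L hL hder
    have hφL : Der φ (conjList L) := der_conjList_of_eq φ L (fun χ hχ => hL χ hχ)
    rcases hδ' with ⟨δ, hδneg, hcase⟩ | hδ'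
    · -- δ' = δ or δ' = ◇δ, with ◇δ ∈ p⁻
      have hdd : Der (Fml.dia φ) (Fml.dia δ) := by
        rcases hcase with h | h <;> subst h
        · exact Der.diaMono (Der.cut hφL hder)
        · exact Der.cut (Der.diaMono (Der.cut hφL hder)) (Der.diaTrans δ)
      refine hcons (Fml.dia δ) hδneg [Fml.dia φ] (by simpa using hφ) ?_
      exact Der.cut (Der.andE1 _ _) hdd
    · -- δ' = ◇φ : modal depth contradiction
      simp only [Set.mem_singleton_iff] at hδ'
      subst hδ'
      have h1 := hder.mdepth_le_s15
      have h2 := hφL.mdepth_le_s15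
      simp [Fml.mdepth] at h1
      omega
  · -- hatR
    refine ⟨fun ψ hψ => ⟨Or.inl ⟨ψ, hψ, Or.inl rfl⟩, Or.inl ⟨ψ, hψ, Or.inr rfl⟩⟩,
      φ, hφ, Or.inr rfl⟩


end QRC1
end

section
/- If C is a finite set of constants, p⁺ is a finite set of formulas each of whose formulas lies in Cl_C(Φ) for a finite set of closed formulas Φ, ∀x ψ ∈ Cl_C(Φ), and |C| > cdepth(⋀p⁺) + cdepth(∀x ψ), then there exists a constant d ∈ C that occurs neither in any formula of p⁺ nor in ∀x ψ; consequently, if additionally ⋀p⁺ ⊬ ∀x ψ in QRC₁, then ⋀p⁺ ⊬ ψ[x/d] in QRC₁. -/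
namespace QRC1

/-! Since `C` has more elements than the constants of `⋀p⁺` and `∀x ψ` together, some `d ∈ C`
is fresh for both. The formulas of `Cl_C(Φ)` are closed, hence so is `⋀p⁺`, so a derivation of
`ψ[x/d]` from `⋀p⁺` generalizes on the fresh constant `d` and then on `x` to one of `∀x ψ`. -/

namespace Fml

variable {Cst Rl : Type} {ar : Rl → ℕ}

theorem fv_subst_const_subset (φ : Fml Cst Rl ar) (x : ℕ) (c : Cst) :
    (φ.subst x (.inr c)).fv ⊆ φ.fv \ {x} := by
  induction φ with
  | top => simp [subst, fv]
  | rel S ts =>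
    rintro y ⟨i, hi⟩
    cases hts : ts i with
    | inl z =>
      by_cases hzx : z = x
      · simp [substT, hts, hzx] at hi
      · simp only [substT, hts, if_neg hzx, Sum.inl.injEq] at hi
        subst hi
        exact ⟨⟨i, hts⟩, hzx⟩
    | inr d => simp [substT, hts] at hi
  | and φ ψ ihφ ihψ =>
    simp only [subst, fv, Set.union_sdiff_distrib]
    exact Set.union_subset_union ihφ ihψ
  | dia φ ih => exact ih
  | all y φ ih =>
    by_cases hyx : y = x
    · subst hyx
      simp [subst, fv]
    · simp only [subst, if_neg hyx, fv]
      rw [Set.sdiff_sdiff_comm]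
      exact Set.sdiff_subset_sdiff_left ih

theorem fv_subset_of_mem_cl (C : Set Cst) {φ χ : Fml Cst Rl ar} (hχ : χ ∈ φ.cl C) :
    χ.fv ⊆ φ.fv := by
  induction φ using Fml.cl.induct generalizing χ with
  | case1 =>
    rw [cl, Set.mem_singleton_iff] at hχ
    rw [hχ]
  | case2 S ts =>
    rw [cl] at hχ
    rcases hχ with rfl | rfl
    · rfl
    · exact Set.empty_subset _
  | case3 φ ψ ihφ ihψ =>
    rw [cl] at hχ
    rcases hχ with (rfl | hχ) | hχ
    · rfl
    · exact (ihφ hχ).trans Set.subset_union_left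
    · exact (ihψ hχ).trans Set.subset_union_right
  | case4 φ ih =>
    rw [cl] at hχ
    rcases hχ with rfl | hχ
    · rfl
    · exact ih hχ
  | case5 y φ ih =>
    rw [cl] at hχ
    rcases hχ with rfl | hχ
    · rfl
    · obtain ⟨c, -, hχ⟩ := Set.mem_iUnion₂.mp hχ
      exact (ih c hχ).trans (fv_subst_const_subset φ y c)

theorem Closed.of_mem_clSet {C : Set Cst} {Φ : Set (Fml Cst Rl ar)}
    (hΦ : ∀ φ ∈ Φ, φ.Closed) {χ : Fml Cst Rl ar} (hχ : χ ∈ clSet C Φ) : χ.Closed := by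
  obtain ⟨φ, hφ, hχ⟩ := Set.mem_iUnion₂.mp hχ
  exact Set.subset_empty_iff.mp ((fv_subset_of_mem_cl C hχ).trans (hΦ φ hφ).subset)

end Fml

section

variable {Cst Rl : Type} {ar : Rl → ℕ}

theorem closed_conjList {L : List (Fml Cst Rl ar)} (h : ∀ χ ∈ L, χ.Closed) :
    (conjList L).Closed := by
  induction L with
  | nil => rfl
  | cons φ L ih =>
    simp only [List.mem_cons, forall_eq_or_imp] at h
    simp only [conjList, Fml.Closed, Fml.fv, Set.union_empty_iff]
    exact ⟨h.1, ih h.2⟩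

theorem exists_mem_notMem_consts_of_cdepth_add_lt {C : Set Cst} (φ ψ : Fml Cst Rl ar)
    (h : φ.cdepth + ψ.cdepth < C.ncard) : ∃ d ∈ C, d ∉ φ.consts ∧ d ∉ ψ.consts := by
  have hlt : (φ.consts ∪ ψ.consts).ncard < C.ncard :=
    (Set.ncard_union_le _ _).trans_lt h
  obtain ⟨d, hdC, hd⟩ := Set.exists_mem_notMem_of_ncard_lt_ncard hlt
    (φ.consts_finite.union ψ.consts_finite)
  exact ⟨d, hdC, fun h => hd (Or.inl h), fun h => hd (Or.inr h)⟩

theorem Der.all_of_subst_fresh_s18 {φ ψ : Fml Cst Rl ar} {x : ℕ} {d : Cst} (hx : x ∉ φ.fv)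
    (hdφ : d ∉ φ.consts) (hdψ : d ∉ ψ.consts) (h : Der φ (ψ.subst x (.inr d))) :
    Der φ (.all x ψ) := by
  refine Der.allI x (Der.genC x d ?_ hdφ hdψ) hx
  rwa [Fml.subst_eq_self_of_notMem_fv _ hx]

end

theorem fresh_constant_general (Cst Rl : Type) (ar : Rl → ℕ)
    (C : Set Cst)
    (Φ : Set (Fml Cst Rl ar)) (hΦcl : ∀ φ ∈ Φ, φ.Closed)
    (L : List (Fml Cst Rl ar)) (hL : ∀ χ ∈ L, χ ∈ clSet C Φ)
    (x : ℕ) (ψ : Fml Cst Rl ar)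
    (hcard : (conjList L).cdepth + (Fml.all x ψ).cdepth < C.ncard) :
    ∃ d ∈ C, d ∉ (conjList L).consts ∧ d ∉ (Fml.all x ψ).consts ∧
      (¬ Der (conjList L) (Fml.all x ψ) →
        ¬ Der (conjList L) (ψ.subst x (Sum.inr d))) := by
  obtain ⟨d, hdC, hdL, hdψ⟩ := exists_mem_notMem_consts_of_cdepth_add_lt _ _ hcard
  have hclosed : (conjList L).Closed :=
    closed_conjList fun χ hχ => Fml.Closed.of_mem_clSet hΦcl (hL χ hχ)
  have hx : x ∉ (conjList L).fv := by rw [hclosed]; exact Set.notMem_empty x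
  exact ⟨d, hdC, hdL, hdψ, fun hnot hder => hnot (Der.all_of_subst_fresh_s18 hx hdL hdψ hder)⟩

theorem fresh_constant (Cst Rl : Type) (ar : Rl → ℕ)
    (C : Set Cst) (hCfin : C.Finite)
    (Φ : Set (Fml Cst Rl ar)) (hΦfin : Φ.Finite) (hΦcl : ∀ φ ∈ Φ, φ.Closed)
    (L : List (Fml Cst Rl ar)) (hL : ∀ χ ∈ L, χ ∈ clSet C Φ)
    (x : ℕ) (ψ : Fml Cst Rl ar) (hψ : Fml.all x ψ ∈ clSet C Φ)
    (hcard : (conjList L).cdepth + (Fml.all x ψ).cdepth < C.ncard) :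
    ∃ d ∈ C, d ∉ (conjList L).consts ∧ d ∉ (Fml.all x ψ).consts ∧
      (¬ Der (conjList L) (Fml.all x ψ) →
        ¬ Der (conjList L) (ψ.subst x (Sum.inr d))) :=
  fresh_constant_general Cst Rl ar C Φ hΦcl L hL x ψ hcard

end QRC1
end
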